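/- For every LTLf formula φ in negation normal form, the formula xnf(φ) obtained by the next-normal-form transformation is semantically equivalent to φ: for every finite trace ρ and position i with 0 ≤ i < |ρ|, ρ,i ⊨ φ if and only if ρ,i ⊨ xnf(φ). -/

import Mathlib

namespace LTLfSynth

open scoped Classical

/-- LTLf formulas in negation normal form. -/
inductive LTLf (P : Type*) where
  | tt : LTLf P
  | ff : LTLf P
  | atom : P → LTLf P
  | natom : P → LTLf P
  | and : LTLf P → LTLf P → LTLf P
  | or : LTLf P → LTLf P → LTLf P
  | next : LTLf P → LTLf P
  | wnext : LTLf P → LTLf P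
  | until_ : LTLf P → LTLf P → LTLf P
  | release : LTLf P → LTLf P → LTLf P

variable {P : Type*}

/-- ◇true -/
def diamondTrue : LTLf P := .until_ .tt .tt

/-- □false -/
def boxFalse : LTLf P := .release .ff .ff

/-- Finite-trace satisfaction `ρ, i ⊨ φ`, where position `ρ.length` (and beyond)
corresponds to the empty suffix (empty-trace semantics). -/
def Sat (ρ : List (Set P)) : LTLf P → ℕ → Prop
  | .tt, _ => True
  | .ff, _ => False
  | .atom p, i => i < ρ.length ∧ p ∈ ρ.getD i ∅
  | .natom p, i => i < ρ.length ∧ p ∉ ρ.getD i ∅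
  | .and φ ψ, i => Sat ρ φ i ∧ Sat ρ ψ i
  | .or φ ψ, i => Sat ρ φ i ∨ Sat ρ ψ i
  | .next φ, i => i + 1 < ρ.length ∧ Sat ρ φ (i + 1)
  | .wnext φ, i => i + 1 < ρ.length → Sat ρ φ (i + 1)
  | .until_ φ ψ, i =>
      ∃ j, i ≤ j ∧ j < ρ.length ∧ Sat ρ ψ j ∧ ∀ k, i ≤ k → k < j → Sat ρ φ k
  | .release φ ψ, i =>
      ∀ j, i ≤ j → j < ρ.length → (Sat ρ ψ j ∨ ∃ k, i ≤ k ∧ k < j ∧ Sat ρ φ k)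

/-- The next-normal-form transformation. -/
def xnf : LTLf P → LTLf P
  | .and φ ψ => .and (xnf φ) (xnf ψ)
  | .or φ ψ => .or (xnf φ) (xnf ψ)
  | .until_ .tt .tt => .until_ .tt .tt
  | .until_ φ ψ => .or (.and (xnf ψ) diamondTrue) (.and (xnf φ) (.next (.until_ φ ψ)))
  | .release .ff .ff => .release .ff .ff
  | .release φ ψ => .and (.or (xnf ψ) boxFalse) (.or (xnf φ) (.wnext (.release φ ψ)))
  | φ => φ

/-! Each step of `xnf` replaces `φ U ψ` or `φ R ψ` by its one-step expansion law, so the theorem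
follows by induction on `φ`. The guards `◇true` and `□false` hold exactly at the positions inside,
resp. outside, the trace; with them the expansion laws hold at every position, also past the end. -/

section ExpansionLaws

variable (ρ : List (Set P)) (φ ψ : LTLf P) (i : ℕ)

lemma sat_diamondTrue_iff : Sat ρ diamondTrue i ↔ i < ρ.length :=
  ⟨fun ⟨_, hij, hj, _⟩ => hij.trans_lt hj, fun hi => ⟨i, le_rfl, hi, trivial, fun _ _ _ => trivial⟩⟩

lemma sat_boxFalse_iff : Sat ρ boxFalse i ↔ ρ.length ≤ i := by
  refine ⟨fun h => not_lt.1 fun hi => ?_, fun hi j hij hj => absurd hj (by omega)⟩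
  rcases h i le_rfl hi with h | ⟨_, _, _, h⟩ <;> exact h

lemma sat_until_iff_expansion :
    Sat ρ (.until_ φ ψ) i ↔
      Sat ρ (.or (.and ψ diamondTrue) (.and φ (.next (.until_ φ ψ)))) i := by
  simp only [Sat, sat_diamondTrue_iff]
  constructor
  · rintro ⟨j, hij, hj, hψ, hφ⟩
    rcases hij.eq_or_lt with rfl | hij
    · exact .inl ⟨hψ, hj⟩
    · exact .inr ⟨hφ i le_rfl hij, by omega, j, hij, hj, hψ, fun k hk hkj => hφ k (by omega) hkj⟩
  · rintro (⟨hψ, hi⟩ | ⟨hφ, -, j, hij, hj, hψ, hφ'⟩)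
    · exact ⟨i, le_rfl, hi, hψ, fun k hk hki => absurd hki (by omega)⟩
    · refine ⟨j, by omega, hj, hψ, fun k hk hkj => ?_⟩
      rcases hk.eq_or_lt with rfl | hk
      · exact hφ
      · exact hφ' k hk hkj

lemma sat_release_iff_expansion :
    Sat ρ (.release φ ψ) i ↔
      Sat ρ (.and (.or ψ boxFalse) (.or φ (.wnext (.release φ ψ)))) i := by
  simp only [Sat, sat_boxFalse_iff]
  constructor
  · intro h
    have hψ : Sat ρ ψ i ∨ ρ.length ≤ i := by
      refine or_iff_not_imp_right.2 fun hi => ?_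
      rcases h i le_rfl (by omega) with hψ | ⟨k, hk, hki, -⟩
      · exact hψ
      · omega
    refine ⟨hψ, or_iff_not_imp_left.2 fun hφ _ j hij hj => ?_⟩
    rcases h j (by omega) hj with hψ | ⟨k, hk, hkj, hφk⟩
    · exact .inl hψ
    · rcases hk.eq_or_lt with rfl | hk
      · exact absurd hφk hφ
      · exact .inr ⟨k, hk, hkj, hφk⟩
  · rintro ⟨hψ, hnext⟩ j hij hj
    rcases hij.eq_or_lt with rfl | hij
    · exact .inl (hψ.resolve_right (by omega))
    rcases hnext with hφ | hnext
    · exact .inr ⟨i, le_rfl, hij, hφ⟩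
    · rcases hnext (by omega) j hij hj with hψ | ⟨k, hk, hkj, hφk⟩
      · exact .inl hψ
      · exact .inr ⟨k, by omega, hkj, hφk⟩

end ExpansionLaws

lemma xnf_until_of_not_tt (φ ψ : LTLf P) (h : ¬(φ = .tt ∧ ψ = .tt)) :
    xnf (.until_ φ ψ) =
      .or (.and (xnf ψ) diamondTrue) (.and (xnf φ) (.next (.until_ φ ψ))) := by
  cases φ <;> cases ψ <;> simp_all [xnf]

lemma xnf_release_of_not_ff (φ ψ : LTLf P) (h : ¬(φ = .ff ∧ ψ = .ff)) :
    xnf (.release φ ψ) =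
      .and (.or (xnf ψ) boxFalse) (.or (xnf φ) (.wnext (.release φ ψ))) := by
  cases φ <;> cases ψ <;> simp_all [xnf]

theorem xnf_semantics_general (φ : LTLf P) (ρ : List (Set P)) (i : ℕ) :
    Sat ρ φ i ↔ Sat ρ (xnf φ) i := by
  induction φ generalizing i with
  | and φ ψ ihφ ihψ => exact and_congr (ihφ i) (ihψ i)
  | or φ ψ ihφ ihψ => exact or_congr (ihφ i) (ihψ i)
  | until_ φ ψ ihφ ihψ =>
    by_cases h : φ = .tt ∧ ψ = .tt
    · obtain ⟨rfl, rfl⟩ := h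
      rfl
    rw [xnf_until_of_not_tt φ ψ h, sat_until_iff_expansion]
    exact or_congr (and_congr_left' (ihψ i)) (and_congr_left' (ihφ i))
  | release φ ψ ihφ ihψ =>
    by_cases h : φ = .ff ∧ ψ = .ff
    · obtain ⟨rfl, rfl⟩ := h
      rfl
    rw [xnf_release_of_not_ff φ ψ h, sat_release_iff_expansion]
    exact and_congr (or_congr_left (ihψ i)) (or_congr_left (ihφ i))
  | _ => rfl

/-- `xnf(φ)` is semantically equivalent to `φ` at every position of every trace. -/
theorem xnf_semantics (φ : LTLf P) (ρ : List (Set P)) (i : ℕ) (hi : i < ρ.length) :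
    Sat ρ φ i ↔ Sat ρ (xnf φ) i :=
  xnf_semantics_general φ ρ i

end LTLfSynth
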